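/- arXiv:1501.07588 — 2 statements merged into one kernel-verified Lean document; each statement's English description precedes it below -/
import Mathlib

section
/- Let w ∈ ^{δ(J)}W. Then the sequence (J_n) is decreasing, i.e. J_0 ⊇ J_1 ⊇ J_2 ⊇ ⋯, and there exists N ≥ 0 such that J_n = J_N and w_n = w_N for all n ≥ N. -/
/-!
The sets `J_n` decrease and lie in the finite set `S`, so they stabilise at some `J_N`; from then
on `w_n` and `w_N` are elements of minimal length of the same double coset `W_{δ(J)} w W_{J_N}`.
Such an element `u` is unique: every `x ∈ W_K u W_I` factors as `x = a u b` with `a ∈ W_K`,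
`b ∈ W_I` and `ℓ(x) = ℓ(a) + ℓ(u) + ℓ(b)`. This is proved by multiplying by one simple reflection
at a time: when the length drops, the exchange condition deletes a letter of a reduced expression,
and it cannot be a letter of `u` since `u` is minimal.

The exchange condition comes from the reflection cocycle: the parity of the number of occurrences
of `t` in the right inversion sequence of a word only depends on the product of the word, and it
is odd when `t` is a right inversion of that product.
-/

lemma mul_mul_inv_eq_iff_eq_inv_mul_mul {G : Type*} [Group G] (a t y : G) :
    a * t * a⁻¹ = y ↔ t = a⁻¹ * y * a := by
  constructor <;> rintro rfl <;> group

namespace CoxeterSystem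

open List

variable {B W : Type*} [Group W] {M : CoxeterMatrix B} (cs : CoxeterSystem M W)

local prefix:100 "s" => cs.simple
local prefix:100 "π" => cs.wordProd
local prefix:100 "ℓ" => cs.length
local prefix:100 "ris" => cs.rightInvSeq

section ParityRepresentation

open scoped Classical

lemma simple_mul_mul_simple_eq_simple_iff (i : B) (t : W) : s i * t * s i = s i ↔ t = s i := by
  rw [mul_eq_right, mul_eq_one_iff_inv_eq, inv_simple, eq_comm]

/-- The permutations of Björner–Brenti, §1.4, realising the reflection cocycle. -/
noncomputable def parityPerm (i : B) : Equiv.Perm (W × ZMod 2) :=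
  Function.Involutive.toPerm (fun p => (s i * p.1 * s i, p.2 + if p.1 = s i then 1 else 0)) <| by
    rintro ⟨t, ε⟩
    simp only [simple_mul_mul_simple_eq_simple_iff, add_assoc, CharTwo.add_self_eq_zero, add_zero,
      Prod.mk.injEq, and_true]
    group
    simp [simple_mul_simple_self]

lemma parityPerm_apply (i : B) (t : W) (ε : ZMod 2) :
    parityPerm cs i (t, ε) = (s i * t * s i, ε + if t = s i then 1 else 0) := rfl

lemma parityPerm_mul_parityPerm_pow_apply (i j : B) (k : ℕ) (t : W) (ε : ZMod 2) :
    ((parityPerm cs i * parityPerm cs j) ^ k) (t, ε) =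
      ((s i * s j) ^ k * t * ((s i * s j) ^ k)⁻¹,
        ε + ∑ l ∈ Finset.range (2 * k), if t = s j * (s i * s j) ^ l then 1 else 0) := by
  induction k generalizing t ε with
  | zero => simp
  | succ k ih =>
    have hconj : s i * (s j * t * s j) * s i = s i * s j * t * (s i * s j)⁻¹ := by
      rw [mul_inv_rev, inv_simple, inv_simple]
      group
    have hshift (l : ℕ) : s i * (s j * t * s j) * s i = s j * (s i * s j) ^ l ↔
        t = s j * (s i * s j) ^ (l + 1 + 1) := by
      rw [hconj, mul_mul_inv_eq_iff_eq_inv_mul_mul, pow_succ, pow_succ', mul_inv_rev, inv_simple,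
        inv_simple]
      simp only [mul_assoc]
    have hone : s j * t * s j = s i ↔ t = s j * (s i * s j) ^ (0 + 1) := by
      rw [zero_add, pow_one, ← mul_assoc]
      simpa only [inv_simple] using mul_mul_inv_eq_iff_eq_inv_mul_mul (s j) t (s i)
    rw [pow_succ, Equiv.Perm.mul_apply, Equiv.Perm.mul_apply, parityPerm_apply, parityPerm_apply,
      ih, mul_add, Finset.sum_range_succ', Finset.sum_range_succ']
    refine Prod.ext ?_ ?_
    · rw [hconj, pow_succ]
      group
    · simp only [hone, hshift, pow_zero, mul_one]
      abel

/-- With `r = s i * s j`, the sum counts `t` among the `s j * r ^ l`, `l < 2 M i j`; as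
`r ^ M i j = 1`, each term occurs twice. -/
lemma isLiftable_parityPerm : M.IsLiftable (parityPerm cs) := by
  intro i j
  ext ⟨t, ε⟩ : 1
  rw [parityPerm_mul_parityPerm_pow_apply, simple_mul_simple_pow, two_mul, Finset.sum_range_add]
  simp only [pow_add, simple_mul_simple_pow, mul_one, inv_one, one_mul, CharTwo.add_self_eq_zero,
    add_zero, Equiv.Perm.one_apply]

noncomputable def parityRep : W →* Equiv.Perm (W × ZMod 2) :=
  cs.lift ⟨parityPerm cs, isLiftable_parityPerm cs⟩

lemma parityRep_wordProd_apply (ω : List B) (t : W) (ε : ZMod 2) :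
    parityRep cs (π ω) (t, ε) = (π ω * t * (π ω)⁻¹, ε + (ris ω).count t) := by
  induction ω generalizing ε with
  | nil => simp [parityRep]
  | cons i ω ih =>
    have hhead : π ω * t * (π ω)⁻¹ = s i ↔ ((π ω)⁻¹ * s i * π ω == t) = true := by
      rw [beq_iff_eq, mul_mul_inv_eq_iff_eq_inv_mul_mul, eq_comm]
    rw [wordProd_cons, map_mul, Equiv.Perm.mul_apply, ih, parityRep, lift_apply_simple,
      parityPerm_apply, rightInvSeq, count_cons, if_congr hhead rfl rfl, mul_inv_rev, inv_simple]
    push_cast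
    refine Prod.ext (by group) (by ring)

noncomputable def reflCocycle (w t : W) : ZMod 2 := (parityRep cs w (t, 0)).2

lemma reflCocycle_wordProd (ω : List B) (t : W) :
    reflCocycle cs (π ω) t = (ris ω).count t := by
  rw [reflCocycle, parityRep_wordProd_apply, zero_add]

lemma parityRep_apply (w t : W) (ε : ZMod 2) :
    parityRep cs w (t, ε) = (w * t * w⁻¹, ε + reflCocycle cs w t) := by
  obtain ⟨ω, rfl⟩ := cs.wordProd_surjective w
  rw [parityRep_wordProd_apply, reflCocycle_wordProd]

lemma reflCocycle_mul (w v t : W) :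
    reflCocycle cs (w * v) t = reflCocycle cs v t + reflCocycle cs w (v * t * v⁻¹) := by
  rw [reflCocycle, map_mul, Equiv.Perm.mul_apply, parityRep_apply, parityRep_apply, zero_add]

lemma reflCocycle_one (t : W) : reflCocycle cs 1 t = 0 := by
  simp [reflCocycle]

lemma reflCocycle_simple_simple (i : B) : reflCocycle cs (s i) (s i) = 1 := by
  simpa using reflCocycle_wordProd cs [i] (s i)

lemma IsReflection.reflCocycle_self {t : W} (ht : cs.IsReflection t) : reflCocycle cs t t = 1 := by
  obtain ⟨w, i, rfl⟩ := ht
  have hinv := reflCocycle_mul cs w w⁻¹ (w * s i * w⁻¹)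
  have hconj : w⁻¹ * (w * s i * w⁻¹) * w⁻¹⁻¹ = s i := by group
  rw [mul_inv_cancel, reflCocycle_one, hconj] at hinv
  have hconj' : s i * w⁻¹ * (w * s i * w⁻¹) * (s i * w⁻¹)⁻¹ = s i := by
    rw [mul_inv_rev, inv_simple, inv_inv,
      show s i * w⁻¹ * (w * s i * w⁻¹) * (w * s i) = s i * s i * s i by group,
      simple_mul_simple_self, one_mul]
  nth_rw 1 [show w * s i * w⁻¹ = w * (s i * w⁻¹) by group]
  rw [reflCocycle_mul, reflCocycle_mul, hconj, hconj', reflCocycle_simple_simple]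
  linear_combination -hinv

lemma reflCocycle_eq_zero_of_not_isRightInversion {w t : W} (hwt : ¬ cs.IsRightInversion w t) :
    reflCocycle cs w t = 0 := by
  obtain ⟨ω, hω, rfl⟩ := cs.exists_isReduced w
  have hnotMem : t ∉ ris ω := fun hmem => hwt (cs.isRightInversion_of_mem_rightInvSeq hω hmem)
  rw [reflCocycle_wordProd, count_eq_zero_of_not_mem hnotMem, Nat.cast_zero]

lemma IsRightInversion.reflCocycle_eq_one {w t : W} (hwt : cs.IsRightInversion w t) :
    reflCocycle cs w t = 1 := by
  have ht := hwt.1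
  have hnot : ¬ cs.IsRightInversion (w * t) t := by
    rintro ⟨-, hlt⟩
    rw [mul_assoc, ht.mul_self, mul_one] at hlt
    exact lt_asymm hlt hwt.2
  calc reflCocycle cs w t
      = reflCocycle cs ((w * t) * t) t := by rw [mul_assoc, ht.mul_self, mul_one]
    _ = reflCocycle cs t t + reflCocycle cs (w * t) (t * t * t⁻¹) := reflCocycle_mul cs _ _ _
    _ = 1 := by
      rw [mul_inv_cancel_right, ht.reflCocycle_self,
        reflCocycle_eq_zero_of_not_isRightInversion cs hnot, add_zero]

theorem mem_rightInvSeq_of_isRightInversion {ω : List B} {t : W}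
    (ht : cs.IsRightInversion (π ω) t) : t ∈ ris ω := by
  have hodd := ht.reflCocycle_eq_one
  rw [reflCocycle_wordProd] at hodd
  refine count_pos_iff.mp (Nat.pos_of_ne_zero fun hzero => ?_)
  rw [hzero, Nat.cast_zero] at hodd
  exact zero_ne_one hodd

end ParityRepresentation

theorem exists_wordProd_eraseIdx_eq_mul_of_isRightInversion {ω : List B} {t : W}
    (ht : cs.IsRightInversion (π ω) t) : ∃ j < ω.length, π (ω.eraseIdx j) = π ω * t := by
  obtain ⟨j, hj, rfl⟩ := getElem_of_mem (cs.mem_rightInvSeq_of_isRightInversion ht)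
  refine ⟨j, by simpa using hj, ?_⟩
  rw [← cs.wordProd_mul_getD_rightInvSeq ω j, getD_eq_getElem _ 1 hj]

section DoubleCoset

open DoubleCoset Subgroup

variable {K I : Set W} {u x : W}

lemma wordProd_mem_closure {T : Set W} {ω : List B} (hω : ∀ i ∈ ω, s i ∈ T) :
    π ω ∈ closure T :=
  list_prod_mem fun _ hy => by
    obtain ⟨i, hi, rfl⟩ := List.mem_map.mp hy
    exact subset_closure (hω i hi)

def IsMinimalInDoubleCoset (K I : Set W) (u : W) : Prop :=
  ∀ y ∈ doubleCoset u (closure K) (closure I), ℓ u ≤ ℓ y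

lemma IsMinimalInDoubleCoset.inv (hu : cs.IsMinimalInDoubleCoset K I u) :
    cs.IsMinimalInDoubleCoset I K u⁻¹ := by
  intro y hy
  obtain ⟨b, hb, a, ha, rfl⟩ := mem_doubleCoset.mp hy
  rw [length_inv, ← length_inv _ (b * u⁻¹ * a)]
  exact hu _ (mem_doubleCoset.mpr ⟨a⁻¹, inv_mem ha, b⁻¹, inv_mem hb, by group⟩)

def HasReducedFactorization (K I : Set W) (u x : W) : Prop :=
  ∃ α β : List B, (∀ i ∈ α, s i ∈ K) ∧ (∀ i ∈ β, s i ∈ I) ∧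
    x = π α * u * π β ∧ ℓ x = α.length + ℓ u + β.length

lemma hasReducedFactorization_self : cs.HasReducedFactorization K I u u :=
  ⟨[], [], by simp, by simp, by simp, by simp⟩

lemma HasReducedFactorization.inv (h : cs.HasReducedFactorization K I u x) :
    cs.HasReducedFactorization I K u⁻¹ x⁻¹ := by
  obtain ⟨α, β, hα, hβ, rfl, hlen⟩ := h
  refine ⟨β.reverse, α.reverse, by simpa using hβ, by simpa using hα, ?_, ?_⟩
  · simp only [wordProd_reverse, mul_inv_rev, mul_assoc]
  · rw [length_inv, length_inv, hlen, length_reverse, length_reverse]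
    ring

/-- Exchange deletes a letter of `α ++ μ ++ β`, where `μ` is a reduced word for `u`; deleting it
from `μ` would produce a shorter element `u * (π β * s i * (π β)⁻¹)` of the double coset. -/
lemma HasReducedFactorization.mul_simple_of_isRightDescent (hu : cs.IsMinimalInDoubleCoset K I u)
    (hx : cs.HasReducedFactorization K I u x) {i : B} (hi : s i ∈ I)
    (hdesc : cs.IsRightDescent x i) : cs.HasReducedFactorization K I u (x * s i) := by
  obtain ⟨α, β, hα, hβ, rfl, hlen⟩ := hx
  obtain ⟨μ, hμ, rfl⟩ := cs.exists_isReduced u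
  have hμlen : ℓ (π μ) = μ.length := hμ
  have hdown := (cs.isRightDescent_iff).mp hdesc
  have hinv : cs.IsRightInversion (π (α ++ μ ++ β)) (s i) :=
    ⟨cs.isReflection_simple i, by rw [wordProd_append, wordProd_append]; omega⟩
  obtain ⟨j, hj, hjω⟩ := cs.exists_wordProd_eraseIdx_eq_mul_of_isRightInversion hinv
  rw [wordProd_append, wordProd_append] at hjω
  simp only [length_append] at hj
  rcases lt_or_ge j (α ++ μ).length with hjαμ | hjβ
  · rw [eraseIdx_append_of_lt_length hjαμ] at hjω
    rw [length_append] at hjαμ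
    rcases lt_or_ge j α.length with hjα | hjμ
    · rw [eraseIdx_append_of_lt_length hjα, wordProd_append, wordProd_append] at hjω
      refine ⟨α.eraseIdx j, β, fun k hk => hα k ((eraseIdx_sublist _ _).subset hk), hβ,
        hjω.symm, ?_⟩
      rw [length_eraseIdx_of_lt hjα]
      omega
    · rw [eraseIdx_append_of_length_le hjμ, wordProd_append, wordProd_append] at hjω
      have hβmem : π β ∈ closure I := wordProd_mem_closure cs hβ
      have hmem : π (μ.eraseIdx (j - α.length)) ∈ doubleCoset (π μ) (closure K) (closure I) := by
        refine mem_doubleCoset.mpr ⟨1, one_mem _, π β * s i * (π β)⁻¹,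
          mul_mem (mul_mem hβmem (subset_closure hi)) (inv_mem hβmem), ?_⟩
        calc π (μ.eraseIdx (j - α.length))
            = (π α)⁻¹ * (π α * π (μ.eraseIdx (j - α.length)) * π β) * (π β)⁻¹ := by group
          _ = (π α)⁻¹ * (π α * π μ * π β * s i) * (π β)⁻¹ := by rw [← hjω, mul_assoc (π α)]
          _ = 1 * π μ * (π β * s i * (π β)⁻¹) := by group
      have hshort := cs.length_wordProd_le (μ.eraseIdx (j - α.length))
      rw [length_eraseIdx_of_lt (by omega)] at hshort
      have := hu _ hmem
      omega
  · rw [eraseIdx_append_of_length_le hjβ, wordProd_append, wordProd_append] at hjω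
    rw [length_append] at hjβ hjω
    refine ⟨α, β.eraseIdx (j - (α.length + μ.length)), hα,
      fun k hk => hβ k ((eraseIdx_sublist _ _).subset hk), by rw [hjω, mul_assoc], ?_⟩
    rw [length_eraseIdx_of_lt (by omega)]
    omega

lemma HasReducedFactorization.mul_simple (hu : cs.IsMinimalInDoubleCoset K I u)
    (hx : cs.HasReducedFactorization K I u x) {i : B} (hi : s i ∈ I) :
    cs.HasReducedFactorization K I u (x * s i) := by
  by_cases hdesc : cs.IsRightDescent x i
  · exact hx.mul_simple_of_isRightDescent cs hu hi hdesc
  obtain ⟨α, β, hα, hβ, rfl, hlen⟩ := hx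
  refine ⟨α, β ++ [i], hα, ?_, by rw [wordProd_append, wordProd_singleton, mul_assoc], ?_⟩
  · simpa [or_imp, forall_and] using ⟨hβ, hi⟩
  · rw [(cs.not_isRightDescent_iff).mp hdesc, hlen, length_append, length_singleton]
    ring

lemma HasReducedFactorization.mul (hI : I ⊆ Set.range cs.simple)
    (hu : cs.IsMinimalInDoubleCoset K I u) (hx : cs.HasReducedFactorization K I u x) {b : W}
    (hb : b ∈ closure I) : cs.HasReducedFactorization K I u (x * b) := by
  induction hb using closure_induction_right with
  | one => rwa [mul_one]
  | mul_right b _ y hy ih =>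
    obtain ⟨i, rfl⟩ := hI hy
    rw [← mul_assoc]
    exact ih.mul_simple cs hu hy
  | mul_inv_cancel b _ y hy ih =>
    obtain ⟨i, rfl⟩ := hI hy
    rw [inv_simple, ← mul_assoc]
    exact ih.mul_simple cs hu hy

lemma HasReducedFactorization.mul_left (hK : K ⊆ Set.range cs.simple)
    (hu : cs.IsMinimalInDoubleCoset K I u) (hx : cs.HasReducedFactorization K I u x) {a : W}
    (ha : a ∈ closure K) : cs.HasReducedFactorization K I u (a * x) := by
  simpa using (hx.inv.mul cs hK hu.inv (inv_mem ha)).inv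

theorem IsMinimalInDoubleCoset.hasReducedFactorization (hK : K ⊆ Set.range cs.simple)
    (hI : I ⊆ Set.range cs.simple) (hu : cs.IsMinimalInDoubleCoset K I u)
    (hx : x ∈ doubleCoset u (closure K) (closure I)) : cs.HasReducedFactorization K I u x := by
  obtain ⟨a, ha, b, hb, rfl⟩ := mem_doubleCoset.mp hx
  rw [mul_assoc]
  exact (cs.hasReducedFactorization_self.mul cs hI hu hb).mul_left cs hK hu ha

theorem IsMinimalInDoubleCoset.eq_of_length_le (hK : K ⊆ Set.range cs.simple)
    (hI : I ⊆ Set.range cs.simple) (hu : cs.IsMinimalInDoubleCoset K I u)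
    (hx : x ∈ doubleCoset u (closure K) (closure I)) (hxu : ℓ x ≤ ℓ u) : x = u := by
  obtain ⟨α, β, -, -, rfl, hlen⟩ := hu.hasReducedFactorization cs hK hI hx
  obtain rfl : α = [] := List.length_eq_zero_iff.mp (by omega)
  obtain rfl : β = [] := List.length_eq_zero_iff.mp (by omega)
  simp

theorem eq_of_forall_length_le_of_mem_doubleCoset (hK : K ⊆ Set.range cs.simple)
    (hI : I ⊆ Set.range cs.simple) {w v : W} (hu : u ∈ doubleCoset w (closure K) (closure I))
    (hv : v ∈ doubleCoset w (closure K) (closure I))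
    (hu_min : ∀ y ∈ doubleCoset w (closure K) (closure I), ℓ u ≤ ℓ y)
    (hv_min : ∀ y ∈ doubleCoset w (closure K) (closure I), ℓ v ≤ ℓ y) : v = u := by
  rw [← doubleCoset_eq_of_mem hu] at hv hu_min hv_min
  exact IsMinimalInDoubleCoset.eq_of_length_le cs hK hI hu_min hv
    (hv_min u (mem_doubleCoset_self _ _ u))

end DoubleCoset

end CoxeterSystem

theorem bedard_sequences_eventually_constant_general
    {B W : Type*} [Finite B] [Group W] {M : CoxeterMatrix B}
    (cs : CoxeterSystem M W) (δ : W ≃* W)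
    (hδ : ⇑δ '' Set.range cs.simple = Set.range cs.simple)
    (J : Set W) (hJ : J ⊆ Set.range cs.simple)
    (w : W)
    (Jn : ℕ → Set W) (wn : ℕ → W)
    (hJ0 : Jn 0 = J)
    (hJrec : ∀ n : ℕ,
      Jn (n + 1) = Jn n ∩ ⇑δ.symm '' {x : W | ∃ s ∈ Jn n, x = wn n * s * (wn n)⁻¹})
    (hwn : ∀ n : ℕ,
      wn n ∈ {x : W | ∃ a ∈ Subgroup.closure (⇑δ '' J),
        ∃ b ∈ Subgroup.closure (Jn n), x = a * w * b} ∧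
      ∀ x ∈ {x : W | ∃ a ∈ Subgroup.closure (⇑δ '' J),
        ∃ b ∈ Subgroup.closure (Jn n), x = a * w * b},
        cs.length (wn n) ≤ cs.length x) :
    (∀ n : ℕ, Jn (n + 1) ⊆ Jn n) ∧
      ∃ N : ℕ, ∀ n ≥ N, Jn n = Jn N ∧ wn n = wn N := by
  have hdec (n : ℕ) : Jn (n + 1) ⊆ Jn n := hJrec n ▸ Set.inter_subset_left
  have hanti : Antitone Jn := antitone_nat_of_succ_le hdec
  have hsimple (n : ℕ) : Jn n ⊆ Set.range cs.simple := ((hanti n.zero_le).trans hJ0.le).trans hJ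
  obtain ⟨N, hN⟩ := WellFoundedLT.antitone_chain_condition
    (f := fun n => cs.simple ⁻¹' Jn n) fun _ _ hmn => Set.preimage_mono (hanti hmn)
  have hJN (n : ℕ) (hn : n ≥ N) : Jn n = Jn N := by
    rw [← Set.image_preimage_eq_of_subset (hsimple n), ← hN n hn,
      Set.image_preimage_eq_of_subset (hsimple N)]
  refine ⟨hdec, N, fun n hn => ⟨hJN n hn, ?_⟩⟩
  have hδJ : ⇑δ '' J ⊆ Set.range cs.simple := hδ ▸ Set.image_mono hJ
  have hD (n : ℕ) : {x : W | ∃ a ∈ Subgroup.closure (⇑δ '' J),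
      ∃ b ∈ Subgroup.closure (Jn n), x = a * w * b} =
      DoubleCoset.doubleCoset w (Subgroup.closure (⇑δ '' J)) (Subgroup.closure (Jn n)) :=
    Set.ext fun _ => DoubleCoset.mem_doubleCoset.symm
  obtain ⟨hn_mem, hn_min⟩ := hD n ▸ hwn n
  obtain ⟨hN_mem, hN_min⟩ := hD N ▸ hwn N
  rw [hJN n hn] at hn_mem hn_min
  exact cs.eq_of_forall_length_le_of_mem_doubleCoset hδJ (hsimple N) hN_mem hn_mem hN_min hn_min

theorem bedard_sequences_eventually_constant
    {B W : Type*} [Finite B] [Group W] {M : CoxeterMatrix B}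
    (cs : CoxeterSystem M W) (δ : W ≃* W)
    (hδ : ⇑δ '' Set.range cs.simple = Set.range cs.simple)
    (J : Set W) (hJ : J ⊆ Set.range cs.simple)
    (w : W)
    (hw : ∀ a ∈ Subgroup.closure (⇑δ '' J),
      cs.length (a * w) = cs.length a + cs.length w)
    (Jn : ℕ → Set W) (wn : ℕ → W)
    (hJ0 : Jn 0 = J)
    (hJrec : ∀ n : ℕ,
      Jn (n + 1) = Jn n ∩ ⇑δ.symm '' {x : W | ∃ s ∈ Jn n, x = wn n * s * (wn n)⁻¹})
    (hwn : ∀ n : ℕ,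
      wn n ∈ {x : W | ∃ a ∈ Subgroup.closure (⇑δ '' J),
        ∃ b ∈ Subgroup.closure (Jn n), x = a * w * b} ∧
      ∀ x ∈ {x : W | ∃ a ∈ Subgroup.closure (⇑δ '' J),
        ∃ b ∈ Subgroup.closure (Jn n), x = a * w * b},
        cs.length (wn n) ≤ cs.length x) :
    (∀ n : ℕ, Jn (n + 1) ⊆ Jn n) ∧
      ∃ N : ℕ, ∀ n ≥ N, Jn n = Jn N ∧ wn n = wn N :=
  bedard_sequences_eventually_constant_general cs δ hδ J hJ w Jn wn hJ0 hJrec hwn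
end

section
/- Let w ∈ ^{δ(J)}W and let J^w_∞ denote the stable value of the sequence (J_n). Then w J^w_∞ w⁻¹ = δ(J^w_∞) as subsets of S; consequently the map τ_w : x ↦ w δ⁻¹(x) w⁻¹ is a group automorphism of the parabolic subgroup W_{δ(J^w_∞)} which maps the set δ(J^w_∞) of simple reflections onto itself. -/
/-!
Let `N` be a stage from which `J_n = J^w_∞`, and put `v = w_N`. Stability says
`δ(J^w_∞) ⊆ v J^w_∞ v⁻¹`; both sides are finite sets of simple reflections of the same size, so
they are equal. Hence `v W_{J^w_∞} v⁻¹ = W_{δ(J^w_∞)} ⊆ W_{δ(J)}`, and writing `v = a w b` with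
`a ∈ W_{δ(J)}`, `b ∈ W_{J^w_∞}` gives `v = c w` with `c = (v b v⁻¹) a ∈ W_{δ(J)}`. Since
`w ∈ ^{δ(J)}W`, `ℓ(v) = ℓ(c) + ℓ(w)`, while minimality of `v` gives `ℓ(v) ≤ ℓ(w)`; so `c = 1`
and `w = v`. Everything then follows from `w J^w_∞ w⁻¹ = δ(J^w_∞)`.
-/

theorem Set.image_eq_image_of_subset_of_finite {α β : Type*} {s : Set α} {f g : α → β}
    (hs : s.Finite) (hf : Function.Injective f) (hg : Function.Injective g)
    (h : f '' s ⊆ g '' s) : f '' s = g '' s :=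
  Set.eq_of_subset_of_ncard_le h
    (by rw [Set.ncard_image_of_injective _ hf, Set.ncard_image_of_injective _ hg])
    (hs.image g)

theorem MulEquiv.exists_restrict_closure {G : Type*} [Group G] (φ : G ≃* G) {S : Set G}
    (hS : ⇑φ '' S = S) :
    ∃ τ : Subgroup.closure S ≃* Subgroup.closure S, ∀ x, (τ x : G) = φ x := by
  have hmap : (Subgroup.closure S).map (φ : G →* G) = Subgroup.closure S := by
    rw [MonoidHom.map_closure]
    exact congrArg _ hS
  exact ⟨(φ.subgroupMap _).trans (MulEquiv.subgroupCongr hmap), fun _ => rfl⟩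

theorem Set.antitone_of_succ_eq_inter {α : Type*} {A B : ℕ → Set α}
    (h : ∀ n, A (n + 1) = A n ∩ B n) : Antitone A :=
  antitone_nat_of_succ_le fun n => h n ▸ Set.inter_subset_left

theorem MulAut.conj_image_eq_of_subset_symm_image {G : Type*} [Group G] (δ : G ≃* G) (v : G)
    {A : Set G} (hA : A.Finite) (hstable : A ⊆ ⇑δ.symm '' (MulAut.conj v '' A)) :
    MulAut.conj v '' A = ⇑δ '' A := by
  refine (Set.image_eq_image_of_subset_of_finite hA δ.injective (MulAut.conj v).injective
    ?_).symm
  rintro _ ⟨s, hs, rfl⟩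
  obtain ⟨x, hx, hxs⟩ := hstable hs
  rw [← hxs, MulEquiv.apply_symm_apply]
  exact hx

theorem Subgroup.conj_mem_closure_conj_image {G : Type*} [Group G] (v : G) {A : Set G} {k : G}
    (hk : k ∈ Subgroup.closure A) : v * k * v⁻¹ ∈ Subgroup.closure (MulAut.conj v '' A) := by
  rw [← MulEquiv.coe_toMonoidHom, ← MonoidHom.map_closure]
  exact Subgroup.mem_map_of_mem _ hk

namespace CoxeterSystem

variable {B W : Type*} [Group W] {M : CoxeterMatrix B} (cs : CoxeterSystem M W)

theorem eq_one_of_length_mul_le {H : Subgroup W} {w c : W}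
    (hw : ∀ a ∈ H, cs.length (a * w) = cs.length a + cs.length w) (hc : c ∈ H)
    (hle : cs.length (c * w) ≤ cs.length w) : c = 1 := by
  have := hw c hc
  exact cs.length_eq_zero_iff.mp (by omega)

theorem eq_of_mem_doubleCoset_of_length_le {H K : Subgroup W} {w v a b : W}
    (hw : ∀ a ∈ H, cs.length (a * w) = cs.length a + cs.length w)
    (hconj : ∀ k ∈ K, v * k * v⁻¹ ∈ H) (ha : a ∈ H) (hb : b ∈ K) (hv : v = a * w * b)
    (hle : cs.length v ≤ cs.length w) : v = w := by
  have hvcw : v = (v * b * v⁻¹ * a) * w := by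
    subst hv
    group
  have hc : v * b * v⁻¹ * a = 1 :=
    cs.eq_one_of_length_mul_le hw (H.mul_mem (hconj b hb) ha) (hvcw ▸ hle)
  rw [hvcw, hc, one_mul]

end CoxeterSystem

theorem bedard_stable_subset_conjugation_general
    {B W : Type*} [Finite B] [Group W] {M : CoxeterMatrix B}
    (cs : CoxeterSystem M W) (δ : W ≃* W)
    (J : Set W) (hJ : J ⊆ Set.range cs.simple)
    (w : W)
    (hw : ∀ a ∈ Subgroup.closure (⇑δ '' J),
      cs.length (a * w) = cs.length a + cs.length w)
    (Jn : ℕ → Set W) (wn : ℕ → W)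
    (hJ0 : Jn 0 = J)
    (hJrec : ∀ n : ℕ,
      Jn (n + 1) = Jn n ∩ ⇑δ.symm '' {x : W | ∃ s ∈ Jn n, x = wn n * s * (wn n)⁻¹})
    (hwn : ∀ n : ℕ,
      wn n ∈ {x : W | ∃ a ∈ Subgroup.closure (⇑δ '' J),
        ∃ b ∈ Subgroup.closure (Jn n), x = a * w * b} ∧
      ∀ x ∈ {x : W | ∃ a ∈ Subgroup.closure (⇑δ '' J),
        ∃ b ∈ Subgroup.closure (Jn n), x = a * w * b},
        cs.length (wn n) ≤ cs.length x)
    (Jinf : Set W) (hJinf : ∃ N : ℕ, ∀ n ≥ N, Jn n = Jinf) :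
    {x : W | ∃ s ∈ Jinf, x = w * s * w⁻¹} = ⇑δ '' Jinf ∧
    ∃ τ : ↥(Subgroup.closure (⇑δ '' Jinf)) ≃* ↥(Subgroup.closure (⇑δ '' Jinf)),
      (∀ x : ↥(Subgroup.closure (⇑δ '' Jinf)),
        (τ x : W) = w * δ.symm (x : W) * w⁻¹) ∧
      (fun x : W => w * δ.symm x * w⁻¹) '' (⇑δ '' Jinf) = ⇑δ '' Jinf := by
  have conj_eq (g : W) (A : Set W) :
      {x : W | ∃ s ∈ A, x = g * s * g⁻¹} = MulAut.conj g '' A := by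
    ext; simp [eq_comm]
  obtain ⟨N, hN⟩ := hJinf
  have hJinfJ : Jinf ⊆ J :=
    hN N le_rfl ▸ hJ0 ▸ Set.antitone_of_succ_eq_inter hJrec N.zero_le
  have hkey : MulAut.conj (wn N) '' Jinf = ⇑δ '' Jinf := by
    refine MulAut.conj_image_eq_of_subset_symm_image δ _
      ((Set.finite_range cs.simple).subset (hJinfJ.trans hJ)) fun s hs => ?_
    rw [← hN (N + 1) N.le_succ, hJrec, hN N le_rfl, conj_eq] at hs
    exact hs.2
  obtain ⟨⟨a, ha, b, hb, hvab⟩, hmin⟩ := hwn N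
  have hconj : ∀ k ∈ Subgroup.closure (Jn N),
      wn N * k * (wn N)⁻¹ ∈ Subgroup.closure (⇑δ '' J) := fun k hk =>
    Subgroup.closure_mono (hkey ▸ Set.image_mono hJinfJ)
      (Subgroup.conj_mem_closure_conj_image _ (hN N le_rfl ▸ hk))
  have hwv : wn N = w := cs.eq_of_mem_doubleCoset_of_length_le hw hconj ha hb hvab
    (hmin w ⟨1, one_mem _, 1, one_mem _, by group⟩)
  rw [hwv] at hkey
  have hτ : (fun x : W => w * δ.symm x * w⁻¹) '' (⇑δ '' Jinf) = ⇑δ '' Jinf := by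
    rw [← Set.image_comp, ← hkey]
    congr 1
    ext s
    simp
  obtain ⟨τ, hτapply⟩ := ((δ.symm : W ≃* W).trans (MulAut.conj w)).exists_restrict_closure hτ
  exact ⟨(conj_eq w Jinf).trans hkey, τ, hτapply, hτ⟩

theorem bedard_stable_subset_conjugation
    {B W : Type*} [Finite B] [Group W] {M : CoxeterMatrix B}
    (cs : CoxeterSystem M W) (δ : W ≃* W)
    (hδ : ⇑δ '' Set.range cs.simple = Set.range cs.simple)
    (J : Set W) (hJ : J ⊆ Set.range cs.simple)
    (w : W)
    (hw : ∀ a ∈ Subgroup.closure (⇑δ '' J),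
      cs.length (a * w) = cs.length a + cs.length w)
    (Jn : ℕ → Set W) (wn : ℕ → W)
    (hJ0 : Jn 0 = J)
    (hJrec : ∀ n : ℕ,
      Jn (n + 1) = Jn n ∩ ⇑δ.symm '' {x : W | ∃ s ∈ Jn n, x = wn n * s * (wn n)⁻¹})
    (hwn : ∀ n : ℕ,
      wn n ∈ {x : W | ∃ a ∈ Subgroup.closure (⇑δ '' J),
        ∃ b ∈ Subgroup.closure (Jn n), x = a * w * b} ∧
      ∀ x ∈ {x : W | ∃ a ∈ Subgroup.closure (⇑δ '' J),
        ∃ b ∈ Subgroup.closure (Jn n), x = a * w * b},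
        cs.length (wn n) ≤ cs.length x)
    (Jinf : Set W) (hJinf : ∃ N : ℕ, ∀ n ≥ N, Jn n = Jinf) :
    {x : W | ∃ s ∈ Jinf, x = w * s * w⁻¹} = ⇑δ '' Jinf ∧
    ∃ τ : ↥(Subgroup.closure (⇑δ '' Jinf)) ≃* ↥(Subgroup.closure (⇑δ '' Jinf)),
      (∀ x : ↥(Subgroup.closure (⇑δ '' Jinf)),
        (τ x : W) = w * δ.symm (x : W) * w⁻¹) ∧
      (fun x : W => w * δ.symm x * w⁻¹) '' (⇑δ '' Jinf) = ⇑δ '' Jinf :=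
  bedard_stable_subset_conjugation_general cs δ J hJ w hw Jn wn hJ0 hJrec hwn Jinf hJinf
end
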